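/- arXiv:0912.4357 — 2 statements merged into one kernel-verified Lean document; each statement's English description precedes it below -/
import Mathlib

section
/- Let 0≤n≤N be integers and f a function on {0,1,…,n}. Then for every 0≤x≤N: (R_{N−1}R_{N−2}⋯R_n f)(x) = (q;q)_{N−n} · q^{−(N−n)(N+n+1)/2} · ∑_{y=max(0,x−N+n)}^{min(x,n)} [N−x choose n−y]_q · [x choose y]_q · q^{y(y+N−x−n)} · f(y), where the product of raising operators is the identity when N=n. -/
open Finset

noncomputable section

/-- q-shifted factorial `(a;q)_m`. -/
def qPoch (q a : ℝ) (m : ℕ) : ℝ := ∏ k ∈ Finset.range m, (1 - a * q ^ k)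

/-- Two-variable raising operator `R_M : V_{2,M} → V_{2,M+1}` (on functions of `x = x₁`). -/
def R2 (q : ℝ) (M : ℕ) (g : ℕ → ℂ) : ℕ → ℂ := fun x =>
  (q : ℂ) ^ (-(M : ℤ) - 1) * (1 - (q : ℂ) ^ x) * g (x - 1) +
    (q : ℂ) ^ ((x : ℤ) - M - 1) * (1 - (q : ℂ) ^ ((M : ℤ) + 1 - x)) * g x

/-- `R2Iter q n k g = R_{n+k-1} ⋯ R_{n+1} R_n g`. -/
def R2Iter (q : ℝ) (n : ℕ) : ℕ → (ℕ → ℂ) → (ℕ → ℂ)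
  | 0, g => g
  | k + 1, g => R2 q (n + k) (R2Iter q n k g)

/-- The q-binomial coefficient `[m choose k]_q`. -/
def qbinom (q : ℝ) (m k : ℕ) : ℝ := qPoch q q m / (qPoch q q k * qPoch q q (m - k))


lemma qPoch_pos {q : ℝ} (hq0 : 0 < q) (hq1 : q < 1) (k : ℕ) : 0 < qPoch q q k := by
  apply Finset.prod_pos
  intro i _
  have h : q ^ (i+1) < 1 := pow_lt_one₀ hq0.le hq1 (by omega)
  have e : q * q ^ i = q ^ (i+1) := by ring
  linarith

lemma qPoch_succ (q : ℝ) (k : ℕ) : qPoch q q (k+1) = qPoch q q k * (1 - q^(k+1)) := by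
  rw [qPoch, Finset.prod_range_succ, ← qPoch]; ring

lemma one_sub_pow_pos {q : ℝ} (hq0 : 0 < q) (hq1 : q < 1) (k : ℕ) (hk : k ≠ 0) :
    0 < 1 - q ^ k := by
  have h : q ^ k < 1 := pow_lt_one₀ hq0.le hq1 hk
  linarith

lemma qbinom_self {q : ℝ} (hq0 : 0 < q) (hq1 : q < 1) (k : ℕ) : qbinom q k k = 1 := by
  have h0 : qPoch q q 0 = 1 := by simp [qPoch]
  rw [qbinom, Nat.sub_self, h0, mul_one, div_self (qPoch_pos hq0 hq1 k).ne']

lemma pascal {q : ℝ} (hq0 : 0 < q) (hq1 : q < 1) (Z Y : ℕ) (h : Y ≤ Z) :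
    (1 - q^(Z+1)) * qbinom q Z Y = (1 - q^(Z+1-Y)) * qbinom q (Z+1) Y := by
  have h1 : Z+1-Y = (Z-Y)+1 := by omega
  rw [qbinom, qbinom, h1, qPoch_succ, qPoch_succ]
  have n1 := (qPoch_pos hq0 hq1 Y).ne'
  have n2 := (qPoch_pos hq0 hq1 (Z-Y)).ne'
  have n3 := (one_sub_pow_pos hq0 hq1 (Z-Y+1) (by omega)).ne'
  field_simp

lemma cpascal {q : ℝ} (hq0 : 0 < q) (hq1 : q < 1) (Z Y : ℕ) (h : Y ≤ Z) :
    (1 - (q:ℂ)^(Z+1)) * ((qbinom q Z Y : ℝ) : ℂ) =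
      (1 - (q:ℂ)^(Z+1-Y)) * ((qbinom q (Z+1) Y : ℝ) : ℂ) := by
  exact_mod_cast congrArg (Complex.ofReal ·) (pascal hq0 hq1 Z Y h)

/-- the generic summand -/
def STerm (q : ℝ) (n : ℕ) (f : ℕ → ℂ) (m x y : ℕ) : ℂ :=
  ((qbinom q (n + m - x) (n - y) : ℝ) : ℂ) * ((qbinom q x y : ℝ) : ℂ) *
    (q : ℂ) ^ ((y : ℤ) * ((y : ℤ) + ((n + m : ℕ) : ℤ) - (x : ℤ) - (n : ℤ))) * f y

def Ssum (q : ℝ) (n : ℕ) (f : ℕ → ℂ) (m x : ℕ) : ℂ :=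
  ∑ y ∈ Finset.Icc (x - m) (min x n), STerm q n f m x y

section perterm
variable {q : ℝ} (n : ℕ) (f : ℕ → ℂ)

lemma I1 (hq0 : 0 < q) (hq1 : q < 1) (m x y : ℕ) (hx1 : 1 ≤ x) (hyx : y < x) (hxN : x ≤ n + m + 1) :
    (1 - (q:ℂ)^x) * STerm q n f m (x-1) y
      = (1 - (q:ℂ)^((x:ℤ)-(y:ℤ))) * STerm q n f (m+1) x y := by
  have hqc : (q:ℂ) ≠ 0 := by exact_mod_cast hq0.ne'
  have hcb := cpascal hq0 hq1 (x-1) y (by omega)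
  rw [show (x-1)+1 = x from by omega] at hcb
  have hpow : (1 : ℂ) - (q:ℂ)^((x:ℤ)-(y:ℤ)) = 1 - (q:ℂ)^(x-y) := by
    rw [show (x:ℤ)-(y:ℤ) = ((x-y : ℕ) : ℤ) from by omega, zpow_natCast]
  rw [hpow]
  unfold STerm
  rw [show n + m - (x-1) = n + (m+1) - x from by omega]
  have he : (y:ℤ) * ((y:ℤ) + ((n + m : ℕ) : ℤ) - ((x-1 : ℕ) : ℤ) - (n:ℤ))
      = (y:ℤ) * ((y:ℤ) + ((n + (m+1) : ℕ) : ℤ) - (x:ℤ) - (n:ℤ)) := by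
    have h2 : (y:ℤ) + ((n + m : ℕ) : ℤ) - ((x-1 : ℕ) : ℤ) - (n:ℤ)
        = (y:ℤ) + ((n + (m+1) : ℕ) : ℤ) - (x:ℤ) - (n:ℤ) := by omega
    rw [h2]
  rw [he]
  linear_combination ((qbinom q (n + (m+1) - x) (n - y) : ℝ) : ℂ) *
    (q : ℂ) ^ ((y:ℤ) * ((y:ℤ) + ((n + (m+1) : ℕ) : ℤ) - (x:ℤ) - (n:ℤ))) * f y * hcb

lemma I2 (hq0 : 0 < q) (hq1 : q < 1) (m x y : ℕ) (hyn : y ≤ n) (hyx : y ≤ x) (hxym : x ≤ y + m) (hxN : x ≤ n + m) :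
    (q:ℂ)^(x:ℤ) * (1 - (q:ℂ)^(((n + m : ℕ) : ℤ) + 1 - (x:ℤ))) * STerm q n f m x y
      = ((q:ℂ)^((x:ℤ)-(y:ℤ)) - (q:ℂ)^((m:ℤ)+1)) * STerm q n f (m+1) x y := by
  have hqc : (q:ℂ) ≠ 0 := by exact_mod_cast hq0.ne'
  have hcb := cpascal hq0 hq1 (n+m-x) (n-y) (by omega)
  rw [show (n+m-x)+1-(n-y) = m+1+y-x from by omega,
      show (n+m-x)+1 = n+(m+1)-x from by omega] at hcb
  have hz1 : ((n + m : ℕ) : ℤ) + 1 - (x:ℤ) = ((n+(m+1)-x : ℕ) : ℤ) := by omega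
  rw [hz1, zpow_natCast]
  unfold STerm
  set eD : ℤ := (y:ℤ) * ((y:ℤ) + ((n + m : ℕ) : ℤ) - (x:ℤ) - (n:ℤ)) with heD
  set eT : ℤ := (y:ℤ) * ((y:ℤ) + ((n + (m+1) : ℕ) : ℤ) - (x:ℤ) - (n:ℤ)) with heT
  have hTD : eT = eD + y := by rw [heD, heT]; push_cast; ring
  have key : (q:ℂ)^(x:ℤ) * (1 - (q:ℂ)^(m+1+y-x)) * (q:ℂ)^eD
      = ((q:ℂ)^((x:ℤ)-(y:ℤ)) - (q:ℂ)^((m:ℤ)+1)) * (q:ℂ)^eT := by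
    rw [← zpow_natCast (q:ℂ) (m+1+y-x), show ((m+1+y-x : ℕ) : ℤ) = (m:ℤ)+1+y-x from by omega]
    rw [mul_sub, mul_one, sub_mul, sub_mul, ← zpow_add₀ hqc, ← zpow_add₀ hqc,
        ← zpow_add₀ hqc, ← zpow_add₀ hqc, ← zpow_add₀ hqc, hTD]
    congr 1
    · congr 1; ring
    · congr 1; ring
  calc (q:ℂ)^(x:ℤ) * (1 - (q:ℂ)^(n+(m+1)-x)) *
        (((qbinom q (n + m - x) (n - y) : ℝ) : ℂ) * ((qbinom q x y : ℝ) : ℂ) * (q:ℂ)^eD * f y)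
      = ((1 - (q:ℂ)^(n+(m+1)-x)) * ((qbinom q (n + m - x) (n - y) : ℝ) : ℂ)) *
        ((q:ℂ)^(x:ℤ) * ((qbinom q x y : ℝ) : ℂ) * (q:ℂ)^eD * f y) := by ring
    _ = ((1 - (q:ℂ)^(m+1+y-x)) * ((qbinom q (n + (m+1) - x) (n - y) : ℝ) : ℂ)) *
        ((q:ℂ)^(x:ℤ) * ((qbinom q x y : ℝ) : ℂ) * (q:ℂ)^eD * f y) := by rw [hcb]
    _ = (((q:ℂ)^(x:ℤ) * (1 - (q:ℂ)^(m+1+y-x)) * (q:ℂ)^eD)) *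
        (((qbinom q (n + (m+1) - x) (n - y) : ℝ) : ℂ) * ((qbinom q x y : ℝ) : ℂ) * f y) := by
        ring
    _ = _ := by rw [key]; ring

end perterm

lemma sumid {q : ℝ} (n : ℕ) (f : ℕ → ℂ) (hq0 : 0 < q) (hq1 : q < 1) (m x : ℕ)
    (hx : x ≤ n + m) :
    (1 - (q:ℂ)^((m:ℤ)+1)) * Ssum q n f (m+1) x
      = (1 - (q:ℂ)^x) * Ssum q n f m (x-1)
        + (q:ℂ)^(x:ℤ) * (1 - (q:ℂ)^(((n+m:ℕ):ℤ)+1-(x:ℤ))) * Ssum q n f m x := by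
  rcases Nat.eq_zero_or_pos x with h0 | hx1
  · subst h0
    have hqs : qbinom q 0 0 = 1 := qbinom_self hq0 hq1 0
    have e1 : Ssum q n f (m+1) 0 = ((qbinom q (n+(m+1)) n : ℝ):ℂ) * f 0 := by
      simp [Ssum, STerm, hqs]
    have e2 : Ssum q n f m 0 = ((qbinom q (n+m) n : ℝ):ℂ) * f 0 := by
      simp [Ssum, STerm, hqs]
    have e3 : (0:ℕ) - 1 = 0 := rfl
    rw [e3, e1, e2]
    have hcb := cpascal hq0 hq1 (n+m) n (by omega)
    rw [show (n+m)+1-n = m+1 from by omega] at hcb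
    rw [show (1:ℂ) - (q:ℂ)^(0:ℕ) = 0 from by simp, zero_mul, zero_add]
    rw [show ((n+m:ℕ):ℤ)+1-((0:ℕ):ℤ) = (((n+m)+1:ℕ):ℤ) from by omega]
    rw [show ((m:ℤ)+1) = ((m+1:ℕ):ℤ) from by omega]
    rw [zpow_natCast, zpow_natCast, zpow_natCast, show n+(m+1) = (n+m)+1 from by omega]
    linear_combination (- f 0) * hcb
  · have E1 : (1 - (q:ℂ)^x) * Ssum q n f m (x-1)
        = ∑ y ∈ Finset.Icc (x-(m+1)) (min x n),
            (if y < x then (1 - (q:ℂ)^((x:ℤ)-(y:ℤ))) * STerm q n f (m+1) x y else 0) := by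
      rw [Ssum, show (x-1) - m = x-(m+1) from by omega]
      by_cases hxn : x ≤ n
      · have hm1 : min (x-1) n = x-1 := by omega
        have hm2 : min x n = x := by omega
        rw [hm1, hm2]
        have hins : Finset.Icc (x-(m+1)) x = insert x (Finset.Icc (x-(m+1)) (x-1)) := by
          ext z; simp only [Finset.mem_Icc, Finset.mem_insert]; omega
        rw [hins, Finset.sum_insert (by simp only [Finset.mem_Icc]; omega)]
        rw [if_neg (lt_irrefl x), zero_add, Finset.mul_sum]
        refine Finset.sum_congr rfl ?_
        intro y hy
        simp only [Finset.mem_Icc] at hy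
        rw [if_pos (by omega)]
        exact I1 n f hq0 hq1 m x y hx1 (by omega) (by omega)
      · have hm1 : min (x-1) n = n := by omega
        have hm2 : min x n = n := by omega
        rw [hm1, hm2, Finset.mul_sum]
        refine Finset.sum_congr rfl ?_
        intro y hy
        simp only [Finset.mem_Icc] at hy
        rw [if_pos (by omega)]
        exact I1 n f hq0 hq1 m x y hx1 (by omega) (by omega)
    have E2 : (q:ℂ)^(x:ℤ) * (1 - (q:ℂ)^(((n+m:ℕ):ℤ)+1-(x:ℤ))) * Ssum q n f m x
        = ∑ y ∈ Finset.Icc (x-(m+1)) (min x n),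
            (if x ≤ y + m then ((q:ℂ)^((x:ℤ)-(y:ℤ)) - (q:ℂ)^((m:ℤ)+1)) * STerm q n f (m+1) x y
             else 0) := by
      by_cases hxm : x ≤ m
      · rw [Ssum, show x - m = x-(m+1) from by omega, Finset.mul_sum]
        refine Finset.sum_congr rfl ?_
        intro y hy; simp only [Finset.mem_Icc] at hy
        rw [if_pos (by omega)]
        exact I2 n f hq0 hq1 m x y (by omega) (by omega) (by omega) hx
      · have hins : Finset.Icc (x-(m+1)) (min x n)
            = insert (x-(m+1)) (Finset.Icc (x-(m+1)+1) (min x n)) := by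
          ext z; simp only [Finset.mem_Icc, Finset.mem_insert]; omega
        rw [hins, Finset.sum_insert (by simp only [Finset.mem_Icc]; omega)]
        rw [if_neg (by omega), zero_add, Ssum, show x - m = x-(m+1)+1 from by omega,
          Finset.mul_sum]
        refine Finset.sum_congr rfl ?_
        intro y hy; simp only [Finset.mem_Icc] at hy
        rw [if_pos (by omega)]
        exact I2 n f hq0 hq1 m x y (by omega) (by omega) (by omega) hx
    rw [E1, E2, ← Finset.sum_add_distrib, Ssum, Finset.mul_sum]
    refine Finset.sum_congr rfl ?_
    intro y hy
    simp only [Finset.mem_Icc] at hy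
    by_cases h1 : y < x
    · by_cases h2 : x ≤ y + m
      · rw [if_pos h1, if_pos h2]; ring
      · rw [if_pos h1, if_neg h2, add_zero]
        rw [show (x:ℤ) - (y:ℤ) = (m:ℤ)+1 from by omega]
    · rw [if_neg h1, if_pos (by omega), zero_add]
      rw [show (x:ℤ) - (y:ℤ) = 0 from by omega, zpow_zero]

lemma mainlem {q : ℝ} (hq0 : 0 < q) (hq1 : q < 1) (n : ℕ) (f : ℕ → ℂ) (m : ℕ) :
    ∀ x, x ≤ n + m → R2Iter q n m f x
      = ((qPoch q q m : ℝ) : ℂ) * (q:ℂ) ^ (-((m * (n + m + n + 1) / 2 : ℕ) : ℤ))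
        * Ssum q n f m x := by
  have hqc : (q:ℂ) ≠ 0 := by
    simp only [ne_eq, Complex.ofReal_eq_zero]; exact hq0.ne'
  induction m with
  | zero =>
    intro x hx
    have h1 : Ssum q n f 0 x = f x := by
      rw [Ssum, Nat.sub_zero, show min x n = x from by omega, Finset.Icc_self,
        Finset.sum_singleton, STerm, show n + 0 - x = n - x from by omega,
        qbinom_self hq0 hq1, qbinom_self hq0 hq1,
        show (x:ℤ) * ((x:ℤ) + ((n + 0 : ℕ) : ℤ) - (x:ℤ) - (n:ℤ)) = 0 from by push_cast; ring,
        zpow_zero]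
      norm_num
    have h2 : qPoch q q 0 = 1 := by simp [qPoch]
    rw [h1, h2, show (0 * (n + 0 + n + 1) / 2 : ℕ) = 0 from by omega]
    norm_num
    rfl
  | succ m IH =>
    intro x hx
    have hP : ((qPoch q q (m+1) : ℝ) : ℂ)
        = ((qPoch q q m : ℝ) : ℂ) * (1 - (q:ℂ)^(m+1)) := by
      exact_mod_cast congrArg (fun r : ℝ => (r : ℂ)) (qPoch_succ q m)
    have hE : (q:ℂ) ^ (-(((m+1) * (n + (m+1) + n + 1) / 2 : ℕ) : ℤ))
        = (q:ℂ) ^ (-((n + m : ℕ) : ℤ) - 1) * (q:ℂ) ^ (-((m * (n + m + n + 1) / 2 : ℕ) : ℤ)) := by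
      have hnat : (m+1) * (n + (m+1) + n + 1) / 2 = (n + m + 1) + m * (n + m + n + 1) / 2 := by
        have h2 : (m+1) * (n + (m+1) + n + 1) = 2*(n+m+1) + m * (n + m + n + 1) := by ring
        omega
      rw [← zpow_add₀ hqc, hnat]
      congr 1
      push_cast
      ring
    have hR : R2Iter q n (m+1) f x = R2 q (n+m) (R2Iter q n m f) x := rfl
    rw [hR, R2]
    by_cases hxm : x ≤ n + m
    · rw [IH (x-1) (by omega), IH x hxm]
      have hsplit : (q:ℂ) ^ ((x:ℤ) - ((n+m:ℕ):ℤ) - 1)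
          = (q:ℂ) ^ ((x:ℤ)) * (q:ℂ) ^ (-((n + m : ℕ) : ℤ) - 1) := by
        rw [← zpow_add₀ hqc]; congr 1; ring
      rw [hsplit, hP, hE]
      have s := sumid n f hq0 hq1 m x hxm
      rw [show (q:ℂ)^((m:ℤ)+1) = (q:ℂ)^((m+1 : ℕ)) from by
        rw [← zpow_natCast (q:ℂ) (m+1)]; norm_num] at s
      linear_combination (((qPoch q q m : ℝ) : ℂ) * (q:ℂ) ^ (-((n + m : ℕ) : ℤ) - 1)
        * (q:ℂ) ^ (-((m * (n + m + n + 1) / 2 : ℕ) : ℤ))) * s.symm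
    · have hxe : x = n + m + 1 := by omega
      subst hxe
      have hz : ((n+m:ℕ):ℤ) + 1 - ((n+m+1 : ℕ):ℤ) = 0 := by omega
      rw [hz, zpow_zero, sub_self, mul_zero, zero_mul, add_zero]
      rw [show n + m + 1 - 1 = n + m from rfl, IH (n+m) (by omega)]
      have hs2 : Ssum q n f m (n+m) = ((qbinom q (n+m) n : ℝ) : ℂ) * f n := by
        rw [Ssum, show n + m - m = n from by omega, show min (n+m) n = n from by omega,
          Finset.Icc_self, Finset.sum_singleton, STerm,
          show n + m - (n+m) = 0 from by omega, show n - n = 0 from by omega,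
          qbinom_self hq0 hq1,
          show (n:ℤ) * ((n:ℤ) + ((n + m : ℕ) : ℤ) - ((n+m : ℕ):ℤ) - (n:ℤ)) = 0 from by ring,
          zpow_zero]
        norm_num
      have hs3 : Ssum q n f (m+1) (n+m+1) = ((qbinom q (n+m+1) n : ℝ) : ℂ) * f n := by
        rw [Ssum, show n + m + 1 - (m+1) = n from by omega,
          show min (n+m+1) n = n from by omega,
          Finset.Icc_self, Finset.sum_singleton, STerm,
          show n + (m+1) - (n+m+1) = 0 from by omega, show n - n = 0 from by omega,
          qbinom_self hq0 hq1,
          show (n:ℤ) * ((n:ℤ) + ((n + (m+1) : ℕ) : ℤ) - ((n+m+1 : ℕ):ℤ) - (n:ℤ)) = 0 from by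
            push_cast; ring,
          zpow_zero]
        norm_num
      rw [hs2, hs3, hP, hE]
      have hcb := cpascal hq0 hq1 (n+m) n (by omega)
      rw [show (n+m)+1-n = m+1 from by omega] at hcb
      linear_combination (((qPoch q q m : ℝ) : ℂ) * (q:ℂ) ^ (-((n + m : ℕ) : ℤ) - 1)
        * (q:ℂ) ^ (-((m * (n + m + n + 1) / 2 : ℕ) : ℤ)) * f n) * hcb

theorem stmt8 (q : ℝ) (hq0 : 0 < q) (hq1 : q < 1) (α β : ℝ) (hα : 0 < α) (hβ : 0 < β)
    (n N : ℕ) (hnN : n ≤ N) (f : ℕ → ℂ) :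
    ∀ x ≤ N,
      R2Iter q n (N - n) f x =
        ((qPoch q q (N - n) : ℝ) : ℂ) * (q : ℂ) ^ (-(((N - n) * (N + n + 1) / 2 : ℕ) : ℤ)) *
          ∑ y ∈ Finset.Icc (x - (N - n)) (min x n),
            ((qbinom q (N - x) (n - y) : ℝ) : ℂ) * ((qbinom q x y : ℝ) : ℂ) *
              (q : ℂ) ^ ((y : ℤ) * ((y : ℤ) + N - x - n)) * f y := by
  obtain ⟨m, rfl⟩ : ∃ m, N = n + m := ⟨N - n, by omega⟩
  intro x hx
  rw [show n + m - n = m from by omega]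
  have h := mainlem hq0 hq1 n f m x (by omega)
  rw [h, Ssum]
  congr 1
end
end

section
/- Let 1≤t≤h−1. Suppose given functions f'_M∈V_{t,M} for all M≥0, f''_K∈V_{h−t,K} for all K≥0, and ψ defined on pairs of integers (with ψ at a negative argument interpreted as 0); for every N≥0 define f_N∈V_{h,N} by f_N(x)=ψ(X_t,N−X_t)·f'_{X_t}(x')·f''_{N−X_t}(x''). Then for every N≥0 and every x∈[h;N]: (L_{N+1}f_{N+1})(x) = ψ(X_t+1,N−X_t)·(L'_{X_t+1}f'_{X_t+1})(x')·f''_{N−X_t}(x'') + A_t q^{t+X_t}·ψ(X_t,N−X_t+1)·f'_{X_t}(x')·(L''_{N−X_t+1}f''_{N−X_t+1})(x''); and, for every N≥1 and every x∈[h;N]: (R_{N−1}f_{N−1})(x) = q^{−N+X_t}·ψ(X_t−1,N−X_t)·(R'_{X_t−1}f'_{X_t−1})(x')·f''_{N−X_t}(x'') + ψ(X_t,N−X_t−1)·f'_{X_t}(x')·(R''_{N−X_t−1}f''_{N−X_t−1})(x''), where any term involving an operator or function with index −1 is interpreted as 0. -/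
open Finset

noncomputable section

/-- Partial sum `X_k = x_1 + ⋯ + x_k` (entries of index `< k`, 0-indexed). -/
def Xlt {h : ℕ} (x : Fin h → ℕ) (k : ℕ) : ℕ := ∑ j : Fin h, if (j : ℕ) < k then x j else 0

/-- Partial product `A_k = α_1 ⋯ α_k` (entries of index `< k`, 0-indexed). -/
def Apar {h : ℕ} (α : Fin h → ℝ) (k : ℕ) : ℝ := ∏ j : Fin h, if (j : ℕ) < k then α j else 1

/-- Raising operator `R_N : V_{h,N} → V_{h,N+1}`. -/
def Rop (q : ℝ) {h : ℕ} (N : ℕ) (f : (Fin h → ℕ) → ℂ) : (Fin h → ℕ) → ℂ := fun x =>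
  ∑ i : Fin h, (q : ℂ) ^ ((Xlt x i : ℤ) - N - 1) * (1 - (q : ℂ) ^ (x i)) *
    f (Function.update x i (x i - 1))

/-- Lowering operator `L_N : V_{h,N} → V_{h,N-1}` (its defining formula does not involve `N`). -/
def Lop (q : ℝ) {h : ℕ} (α : Fin h → ℝ) (f : (Fin h → ℕ) → ℂ) : (Fin h → ℕ) → ℂ := fun x =>
  ∑ j : Fin h, ((Apar α j : ℝ) : ℂ) * (q : ℂ) ^ ((j : ℕ) + Xlt x j) *
    ((α j : ℂ) * (q : ℂ) ^ (x j + 1) - 1) * f (Function.update x j (x j + 1))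

/-- The multidimensional q-Hahn operator `D_N : V_{h,N} → V_{h,N}`. -/
def Dop (q : ℝ) {h : ℕ} (α : Fin h → ℝ) (N : ℕ) (f : (Fin h → ℕ) → ℂ) : (Fin h → ℕ) → ℂ :=
  fun x =>
    (∑ i : Fin h, ∑ j : Fin h,
      if i ≠ j then
        ((Apar α j : ℝ) : ℂ) *
          (q : ℂ) ^ ((((j : ℕ) + Xlt x j + Xlt x i : ℕ) : ℤ) - N -
            (if (i : ℕ) < (j : ℕ) then 1 else 0)) *
          ((α j : ℂ) * (q : ℂ) ^ (x j + 1) - 1) * (1 - (q : ℂ) ^ (x i)) *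
          f (Function.update (Function.update x j (x j + 1)) i (x i - 1))
      else 0)
    + ((∑ j : Fin h,
          ((Apar α j : ℝ) : ℂ) * (q : ℂ) ^ ((((j : ℕ) + 2 * Xlt x j : ℕ) : ℤ) - N) *
            ((α j : ℂ) * (q : ℂ) ^ (x j) - 1) * (1 - (q : ℂ) ^ (x j)))
        + (((Apar α h : ℝ) : ℂ) * (q : ℂ) ^ (((h + N : ℕ) : ℤ) - 1) - 1) *
            (1 - (q : ℂ) ^ (-(N : ℤ)))) * f x

/-- Scalar product on `V_{h,N}`. -/
def innerV (q : ℝ) {h : ℕ} (α : Fin h → ℝ) (N : ℕ) (f g : (Fin h → ℕ) → ℂ) : ℂ :=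
  (q : ℂ) ^ (N * (N + 1) / 2) *
    ∑ x ∈ Finset.Nat.antidiagonalTuple h N,
      (∏ i : Fin h, ((qPoch q (q * α i) (x i) / qPoch q q (x i) : ℝ) : ℂ) *
        ((α i * q : ℝ) : ℂ) ^ ((N : ℤ) - Xlt x ((i : ℕ) + 1))) *
      f x * (starRingEnd ℂ) (g x)

/-- `RopIter q n k f = R_{n+k-1} ⋯ R_{n+1} R_n f`. -/
def RopIter (q : ℝ) {h : ℕ} (n : ℕ) : ℕ → ((Fin h → ℕ) → ℂ) → ((Fin h → ℕ) → ℂ)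
  | 0, f => f
  | k + 1, f => Rop q (n + k) (RopIter q n k f)

/-- The left block `x' = (x_1, …, x_t)` of a tuple `x` (used only when `t ≤ h`). -/
def xL (h t : ℕ) (x : Fin h → ℕ) : Fin t → ℕ := fun i =>
  if hi : (i : ℕ) < h then x ⟨i, hi⟩ else 0

/-- The right block `x'' = (x_{t+1}, …, x_h)` of a tuple `x`. -/
def xR (h t : ℕ) (x : Fin h → ℕ) : Fin (h - t) → ℕ := fun i =>
  if hi : t + (i : ℕ) < h then x ⟨t + i, hi⟩ else 0

/-- The left block `(α_1, …, α_t)` of the parameters (used only when `t ≤ h`). -/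
def alphaL (h t : ℕ) (α : Fin h → ℝ) : Fin t → ℝ := fun i =>
  if hi : (i : ℕ) < h then α ⟨i, hi⟩ else 1

/-- The right block `(α_{t+1}, …, α_h)` of the parameters. -/
def alphaR (h t : ℕ) (α : Fin h → ℝ) : Fin (h - t) → ℝ := fun i =>
  if hi : t + (i : ℕ) < h then α ⟨t + i, hi⟩ else 1

section Helpers

variable {h t m : ℕ}

lemma sum_update_add (f : Fin h → ℕ) (i : Fin h) (v : ℕ) :
    (∑ j, Function.update f i v j) + f i = (∑ j, f j) + v := by
  rw [Finset.sum_update_of_mem (Finset.mem_univ i),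
    ← Finset.add_sum_erase _ f (Finset.mem_univ i)]
  simp [Finset.sdiff_singleton_eq_erase]
  ring

lemma Xlt_le_sum (x : Fin h → ℕ) (k : ℕ) : Xlt x k ≤ ∑ i, x i := by
  unfold Xlt
  apply Finset.sum_le_sum
  intro i _
  split <;> simp

lemma Xlt_add_le (x : Fin h → ℕ) (k : ℕ) (i : Fin h) (hik : k ≤ (i : ℕ)) :
    Xlt x k + x i ≤ ∑ j, x j := by
  have e1 : ∑ j, x j = Xlt x k + ∑ j : Fin h, (if (j : ℕ) < k then 0 else x j) := by
    unfold Xlt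
    rw [← Finset.sum_add_distrib]
    apply Finset.sum_congr rfl
    intro j _
    split <;> simp
  rw [e1]
  gcongr
  calc x i = (if (i : ℕ) < k then 0 else x i) := by simp [Nat.not_lt.mpr hik]
    _ ≤ _ := Finset.single_le_sum (f := fun j : Fin h => if (j : ℕ) < k then 0 else x j)
        (by intro j _; positivity) (Finset.mem_univ i)

lemma x_le_Xlt (x : Fin h → ℕ) (i : Fin h) (k : ℕ) (hik : (i : ℕ) < k) : x i ≤ Xlt x k := by
  calc x i = (if (i : ℕ) < k then x i else 0) := by simp [hik]
    _ ≤ _ := Finset.single_le_sum (f := fun j : Fin h => if (j : ℕ) < k then x j else 0)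
        (by intro j _; positivity) (Finset.mem_univ i)

lemma Xlt_update_add (x : Fin h → ℕ) (i : Fin h) (v k : ℕ) (hik : (i : ℕ) < k) :
    Xlt (Function.update x i v) k + x i = Xlt x k + v := by
  have e1 : (fun j : Fin h => if (j : ℕ) < k then Function.update x i v j else 0)
      = Function.update (fun j : Fin h => if (j : ℕ) < k then x j else 0) i v := by
    funext j
    rcases eq_or_ne j i with rfl | hj
    · simp [hik]
    · simp [Function.update_apply, hj]
  unfold Xlt
  rw [e1]
  have := sum_update_add (fun j : Fin h => if (j : ℕ) < k then x j else 0) i v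
  simpa [hik] using this

lemma Xlt_update_of_ge (x : Fin h → ℕ) (i : Fin h) (v k : ℕ) (hik : k ≤ (i : ℕ)) :
    Xlt (Function.update x i v) k = Xlt x k := by
  unfold Xlt
  apply Finset.sum_congr rfl
  intro j _
  rcases eq_or_ne j i with rfl | hj
  · simp [Nat.not_lt.mpr hik]
  · simp [Function.update_apply, hj]

lemma sum_split {M : Type*} [AddCommMonoid M] (htm : t + m = h) (g : Fin h → M) :
    ∑ i, g i = (∑ i : Fin t, g (Fin.cast htm (Fin.castAdd m i)))
      + ∑ i : Fin m, g (Fin.cast htm (Fin.natAdd t i)) := by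
  rw [← Equiv.sum_comp (finCongr htm) g, Fin.sum_univ_add]
  rfl

lemma xL_apply (x : Fin h → ℕ) (i : Fin h) (j : Fin t) (hij : (i : ℕ) = (j : ℕ)) :
    xL h t x j = x i := by
  have hj : (j : ℕ) < h := hij ▸ i.isLt
  simp only [xL, dif_pos hj]
  congr 1
  exact Fin.ext hij.symm

lemma alphaL_apply (α : Fin h → ℝ) (i : Fin h) (j : Fin t) (hij : (i : ℕ) = (j : ℕ)) :
    alphaL h t α j = α i := by
  have hj : (j : ℕ) < h := hij ▸ i.isLt
  simp only [alphaL, dif_pos hj]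
  congr 1
  exact Fin.ext hij.symm

lemma xR_apply (x : Fin h → ℕ) (i : Fin h) (j : Fin (h - t)) (hij : (i : ℕ) = t + (j : ℕ)) :
    xR h t x j = x i := by
  have hj : t + (j : ℕ) < h := hij ▸ i.isLt
  simp only [xR, dif_pos hj]
  congr 1
  exact Fin.ext hij.symm

lemma alphaR_apply (α : Fin h → ℝ) (i : Fin h) (j : Fin (h - t)) (hij : (i : ℕ) = t + (j : ℕ)) :
    alphaR h t α j = α i := by
  have hj : t + (j : ℕ) < h := hij ▸ i.isLt
  simp only [alphaR, dif_pos hj]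
  congr 1
  exact Fin.ext hij.symm

lemma xL_update_left (x : Fin h → ℕ) (i : Fin h) (j : Fin t) (hij : (i : ℕ) = (j : ℕ)) (v : ℕ) :
    xL h t (Function.update x i v) = Function.update (xL h t x) j v := by
  funext k
  have hk : (k : ℕ) < t := k.isLt
  rcases eq_or_ne k j with rfl | hkj
  · rw [xL_apply _ i _ hij, Function.update_self, Function.update_self]
  · have hki : ∀ hkh : (k : ℕ) < h, (⟨(k : ℕ), hkh⟩ : Fin h) ≠ i := by
      intro hkh hcon
      exact hkj (Fin.ext (by rw [← hij, ← hcon]))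
    rw [Function.update_of_ne hkj]
    by_cases hkh : (k : ℕ) < h
    · rw [xL_apply (t := t) _ ⟨k, hkh⟩ k rfl, xL_apply (t := t) _ ⟨k, hkh⟩ k rfl,
        Function.update_of_ne (hki hkh)]
    · simp [xL, hkh]

lemma xR_update_left (x : Fin h → ℕ) (i : Fin h) (hi : (i : ℕ) < t) (v : ℕ) :
    xR h t (Function.update x i v) = xR h t x := by
  funext k
  by_cases hk : t + (k : ℕ) < h
  · rw [xR_apply _ ⟨t + k, hk⟩ k rfl, xR_apply _ ⟨t + k, hk⟩ k rfl,
      Function.update_of_ne (by intro hcon; have := congrArg Fin.val hcon; simp at this; omega)]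
  · simp [xR, hk]

lemma xL_update_right (x : Fin h → ℕ) (i : Fin h) (hi : t ≤ (i : ℕ)) (v : ℕ) :
    xL h t (Function.update x i v) = xL h t x := by
  funext k
  have hk : (k : ℕ) < t := k.isLt
  by_cases hkh : (k : ℕ) < h
  · rw [xL_apply (t := t) _ ⟨k, hkh⟩ k rfl, xL_apply (t := t) _ ⟨k, hkh⟩ k rfl,
      Function.update_of_ne (by intro hcon; have := congrArg Fin.val hcon; simp at this; omega)]
  · simp [xL, hkh]

lemma xR_update_right (x : Fin h → ℕ) (i : Fin h) (j : Fin (h - t))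
    (hij : (i : ℕ) = t + (j : ℕ)) (v : ℕ) :
    xR h t (Function.update x i v) = Function.update (xR h t x) j v := by
  funext k
  rcases eq_or_ne k j with rfl | hkj
  · rw [xR_apply _ i _ hij, Function.update_self, Function.update_self]
  · rw [Function.update_of_ne hkj]
    by_cases hk : t + (k : ℕ) < h
    · rw [xR_apply _ ⟨t + k, hk⟩ k rfl, xR_apply _ ⟨t + k, hk⟩ k rfl,
        Function.update_of_ne (by
          intro hcon; have := congrArg Fin.val hcon; simp [hij] at this
          exact hkj (Fin.ext (by omega)))]
    · simp [xR, hk]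

lemma Xlt_xL (htm : t + (h - t) = h) (x : Fin h → ℕ) (k : ℕ) (hk : k ≤ t) :
    Xlt (xL h t x) k = Xlt x k := by
  unfold Xlt
  rw [sum_split htm]
  have e2 : ∑ i : Fin (h - t),
      (if ((Fin.cast htm (Fin.natAdd t i) : Fin h) : ℕ) < k then x (Fin.cast htm (Fin.natAdd t i)) else 0) = 0 := by
    apply Finset.sum_eq_zero
    intro i _
    have hv : ((Fin.cast htm (Fin.natAdd t i) : Fin h) : ℕ) = t + (i : ℕ) := rfl
    rw [hv, if_neg (by omega)]
  rw [e2, add_zero]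
  apply Finset.sum_congr rfl
  intro i _
  have hv : ((Fin.cast htm (Fin.castAdd (h - t) i) : Fin h) : ℕ) = (i : ℕ) := rfl
  rw [hv, xL_apply x (Fin.cast htm (Fin.castAdd (h - t) i)) i hv]

lemma Xlt_xR (htm : t + (h - t) = h) (x : Fin h → ℕ) (k : ℕ) :
    Xlt x t + Xlt (xR h t x) k = Xlt x (t + k) := by
  have e0 : ∀ K : ℕ, t ≤ K → Xlt x K = (∑ i : Fin t, x (Fin.cast htm (Fin.castAdd (h - t) i)))
      + ∑ i : Fin (h - t), (if t + (i : ℕ) < K then x (Fin.cast htm (Fin.natAdd t i)) else 0) := by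
    intro K hK
    unfold Xlt
    rw [sum_split htm]
    congr 1
    · apply Finset.sum_congr rfl
      intro i _
      have hv : ((Fin.cast htm (Fin.castAdd (h - t) i) : Fin h) : ℕ) = (i : ℕ) := rfl
      rw [hv, if_pos (by have : (i : ℕ) < t := i.isLt; omega)]
  rw [e0 t le_rfl, e0 (t + k) (Nat.le_add_right t k)]
  have e1 : ∑ i : Fin (h - t), (if t + (i : ℕ) < t then x (Fin.cast htm (Fin.natAdd t i)) else 0) = 0 := by
    apply Finset.sum_eq_zero; intro i _; simp
  rw [e1, add_zero]
  congr 1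
  unfold Xlt
  apply Finset.sum_congr rfl
  intro i _
  have hc : (t + (i : ℕ) < t + k) ↔ ((i : ℕ) < k) := by omega
  by_cases hik : (i : ℕ) < k
  · rw [if_pos (hc.mpr hik), if_pos hik, xR_apply x (Fin.cast htm (Fin.natAdd t i)) i rfl]
  · rw [if_neg (fun hcon => hik (hc.mp hcon)), if_neg hik]

lemma Apar_alphaL (htm : t + (h - t) = h) (α : Fin h → ℝ) (k : ℕ) (hk : k ≤ t) :
    Apar (alphaL h t α) k = Apar α k := by
  unfold Apar
  rw [Fintype.prod_equiv (finCongr htm).symm _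
    (fun i : Fin (t + (h - t)) => if (i : ℕ) < k then α (Fin.cast htm i) else 1) (by
      intro i
      congr 1)]
  rw [Fin.prod_univ_add]
  have e2 : ∏ i : Fin (h - t), (if ((Fin.natAdd t i : Fin (t + (h - t))) : ℕ) < k then α (Fin.cast htm (Fin.natAdd t i)) else 1) = 1 := by
    apply Finset.prod_eq_one
    intro i _
    have hv : ((Fin.natAdd t i : Fin (t + (h - t))) : ℕ) = t + (i : ℕ) := rfl
    rw [hv, if_neg (by omega)]
  rw [e2, mul_one]
  apply Finset.prod_congr rfl
  intro i _
  have hv : ((Fin.cast htm (Fin.castAdd (h - t) i) : Fin h) : ℕ) = (i : ℕ) := rfl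
  show (if ((Fin.castAdd (h - t) i : Fin (t + (h - t))) : ℕ) < k then _ else _) = _
  rw [show ((Fin.castAdd (h - t) i : Fin (t + (h - t))) : ℕ) = (i : ℕ) from rfl]
  by_cases hik : (i : ℕ) < k
  · rw [if_pos hik, if_pos hik, alphaL_apply α (Fin.cast htm (Fin.castAdd (h - t) i)) i hv]
  · rw [if_neg hik, if_neg hik]

lemma Apar_alphaR (htm : t + (h - t) = h) (α : Fin h → ℝ) (k : ℕ) :
    Apar α t * Apar (alphaR h t α) k = Apar α (t + k) := by
  have e0 : ∀ K : ℕ, t ≤ K → Apar α K = (∏ i : Fin t, α (Fin.cast htm (Fin.castAdd (h - t) i)))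
      * ∏ i : Fin (h - t), (if t + (i : ℕ) < K then α (Fin.cast htm (Fin.natAdd t i)) else 1) := by
    intro K hK
    unfold Apar
    rw [Fintype.prod_equiv (finCongr htm).symm _
      (fun i : Fin (t + (h - t)) => if (i : ℕ) < K then α (Fin.cast htm i) else 1) (by intro i; congr 1)]
    rw [Fin.prod_univ_add]
    congr 1
    · apply Finset.prod_congr rfl
      intro i _
      have hv : ((Fin.castAdd (h - t) i : Fin (t + (h - t))) : ℕ) = (i : ℕ) := rfl
      rw [hv, if_pos (by have : (i : ℕ) < t := i.isLt; omega)]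
  rw [e0 t le_rfl, e0 (t + k) (Nat.le_add_right t k)]
  have e1 : ∏ i : Fin (h - t), (if t + (i : ℕ) < t then α (Fin.cast htm (Fin.natAdd t i)) else 1) = 1 := by
    apply Finset.prod_eq_one; intro i _; simp
  rw [e1, mul_one]
  congr 1
  unfold Apar
  apply Finset.prod_congr rfl
  intro i _
  have hc : (t + (i : ℕ) < t + k) ↔ ((i : ℕ) < k) := by omega
  by_cases hik : (i : ℕ) < k
  · rw [if_pos (hc.mpr hik), if_pos hik, alphaR_apply α (Fin.cast htm (Fin.natAdd t i)) i rfl]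
  · rw [if_neg (fun hcon => hik (hc.mp hcon)), if_neg hik]

end Helpers
theorem stmt14 (q : ℝ) (hq0 : 0 < q) (hq1 : q < 1) (h t : ℕ) (hh : 2 ≤ h)
    (ht1 : 1 ≤ t) (ht2 : t ≤ h - 1)
    (α : Fin h → ℝ) (hα : ∀ i, 0 < α i)
    (f' : ℕ → (Fin t → ℕ) → ℂ) (f'' : ℕ → (Fin (h - t) → ℕ) → ℂ) (ψ : ℕ → ℕ → ℂ)
    (F : (Fin h → ℕ) → ℂ)
    (hF : ∀ x : Fin h → ℕ,
      F x = ψ (Xlt x t) ((∑ i, x i) - Xlt x t) * f' (Xlt x t) (xL h t x) *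
        f'' ((∑ i, x i) - Xlt x t) (xR h t x)) :
    (∀ N : ℕ, ∀ x : Fin h → ℕ, (∑ i, x i) = N →
      Lop q α F x =
        ψ (Xlt x t + 1) (N - Xlt x t) *
            Lop q (alphaL h t α) (f' (Xlt x t + 1)) (xL h t x) * f'' (N - Xlt x t) (xR h t x)
          + ((Apar α t : ℝ) : ℂ) * (q : ℂ) ^ (t + Xlt x t) * ψ (Xlt x t) (N - Xlt x t + 1) *
              f' (Xlt x t) (xL h t x) *
              Lop q (alphaR h t α) (f'' (N - Xlt x t + 1)) (xR h t x)) ∧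
    (∀ N : ℕ, 1 ≤ N → ∀ x : Fin h → ℕ, (∑ i, x i) = N →
      Rop q (N - 1) F x =
        (q : ℂ) ^ ((Xlt x t : ℤ) - N) * ψ (Xlt x t - 1) (N - Xlt x t) *
            Rop q (Xlt x t - 1) (f' (Xlt x t - 1)) (xL h t x) * f'' (N - Xlt x t) (xR h t x)
          + ψ (Xlt x t) (N - Xlt x t - 1) * f' (Xlt x t) (xL h t x) *
              Rop q (N - Xlt x t - 1) (f'' (N - Xlt x t - 1)) (xR h t x)) := by
  have ht : t ≤ h := le_trans ht2 (Nat.sub_le h 1)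
  have htm : t + (h - t) = h := Nat.add_sub_cancel' ht
  have hq0' : (q : ℂ) ≠ 0 := by
    simp only [ne_eq, Complex.ofReal_eq_zero]
    exact hq0.ne'
  constructor
  · -- L part
    intro N x hN
    have hXN : Xlt x t ≤ N := hN ▸ Xlt_le_sum x t
    unfold Lop
    rw [sum_split htm]
    rw [Finset.mul_sum, Finset.sum_mul, Finset.mul_sum]
    congr 1
    · apply Finset.sum_congr rfl
      intro j _
      set J : Fin h := Fin.cast htm (Fin.castAdd (h - t) j) with hJdef
      have hJ : (J : ℕ) = (j : ℕ) := rfl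
      have hJt : (J : ℕ) < t := by rw [hJ]; exact j.isLt
      have h1 : Xlt (Function.update x J (x J + 1)) t = Xlt x t + 1 := by
        have := Xlt_update_add x J (x J + 1) t hJt
        omega
      have h2 : ∑ i, Function.update x J (x J + 1) i = N + 1 := by
        have := sum_update_add x J (x J + 1)
        omega
      rw [hF, h1, h2, Nat.add_sub_add_right N 1 (Xlt x t),
        xL_update_left x J j hJ, xR_update_left x J hJt,
        Apar_alphaL htm α _ (le_of_lt j.isLt),
        Xlt_xL htm x _ (le_of_lt j.isLt),
        alphaL_apply α J j hJ, xL_apply x J j hJ, hJ]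
      ring
    · apply Finset.sum_congr rfl
      intro j _
      set J : Fin h := Fin.cast htm (Fin.natAdd t j) with hJdef
      have hJ : (J : ℕ) = t + (j : ℕ) := rfl
      have hJt : t ≤ (J : ℕ) := by rw [hJ]; exact Nat.le_add_right t j
      have h1 : Xlt (Function.update x J (x J + 1)) t = Xlt x t :=
        Xlt_update_of_ge x J (x J + 1) t hJt
      have h2 : ∑ i, Function.update x J (x J + 1) i = N + 1 := by
        have := sum_update_add x J (x J + 1)
        omega
      rw [hF, h1, h2, show N + 1 - Xlt x t = (N - Xlt x t) + 1 by omega,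
        xL_update_right x J hJt, xR_update_right x J j hJ,
        alphaR_apply α J j hJ, xR_apply x J j hJ, hJ,
        ← Apar_alphaR htm α (j : ℕ), ← Xlt_xR htm x (j : ℕ),
        show t + (j : ℕ) + (Xlt x t + Xlt (xR h t x) (j : ℕ))
          = (t + Xlt x t) + ((j : ℕ) + Xlt (xR h t x) (j : ℕ)) by ring,
        pow_add]
      push_cast
      ring
  · -- R part
    intro N hN1 x hN
    have hXN : Xlt x t ≤ N := hN ▸ Xlt_le_sum x t
    unfold Rop
    rw [sum_split htm]
    rw [Finset.mul_sum, Finset.sum_mul, Finset.mul_sum]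
    congr 1
    · apply Finset.sum_congr rfl
      intro j _
      set J : Fin h := Fin.cast htm (Fin.castAdd (h - t) j) with hJdef
      have hJ : (J : ℕ) = (j : ℕ) := rfl
      have hJt : (J : ℕ) < t := by rw [hJ]; exact j.isLt
      rw [xL_apply x J j hJ]
      rcases Nat.eq_zero_or_pos (x J) with hx0 | hx1
      · rw [hx0]
        simp
      · have hxX : x J ≤ Xlt x t := x_le_Xlt x J t hJt
        have h1 : Xlt (Function.update x J (x J - 1)) t = Xlt x t - 1 := by
          have := Xlt_update_add x J (x J - 1) t hJt
          omega
        have h2 : ∑ i, Function.update x J (x J - 1) i = N - 1 := by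
          have := sum_update_add x J (x J - 1)
          omega
        have hpow : (q : ℂ) ^ ((Xlt x t : ℤ) - N) *
            (q : ℂ) ^ ((Xlt x (j : ℕ) : ℤ) - ((Xlt x t - 1 : ℕ) : ℤ) - 1)
            = (q : ℂ) ^ ((Xlt x (j : ℕ) : ℤ) - ((N - 1 : ℕ) : ℤ) - 1) := by
          rw [← zpow_add₀ hq0']
          congr 1
          omega
        rw [hF, h1, h2, show N - 1 - (Xlt x t - 1) = N - Xlt x t by omega,
          xL_update_left x J j hJ, xR_update_left x J hJt,
          Xlt_xL htm x _ (le_of_lt j.isLt), hJ, ← hpow]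
        ring
    · apply Finset.sum_congr rfl
      intro j _
      set J : Fin h := Fin.cast htm (Fin.natAdd t j) with hJdef
      have hJ : (J : ℕ) = t + (j : ℕ) := rfl
      have hJt : t ≤ (J : ℕ) := by rw [hJ]; exact Nat.le_add_right t j
      rw [xR_apply x J j hJ]
      rcases Nat.eq_zero_or_pos (x J) with hx0 | hx1
      · rw [hx0]
        simp
      · have hxX : Xlt x t + x J ≤ N := hN ▸ Xlt_add_le x t J hJt
        have h1 : Xlt (Function.update x J (x J - 1)) t = Xlt x t :=
          Xlt_update_of_ge x J (x J - 1) t hJt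
        have h2 : ∑ i, Function.update x J (x J - 1) i = N - 1 := by
          have := sum_update_add x J (x J - 1)
          omega
        rw [hF, h1, h2, show N - 1 - Xlt x t = N - Xlt x t - 1 by omega,
          xL_update_right x J hJt, xR_update_right x J j hJ, hJ,
          ← Xlt_xR htm x (j : ℕ),
          show ((Xlt x t + Xlt (xR h t x) (j : ℕ) : ℕ) : ℤ) - ((N - 1 : ℕ) : ℤ) - 1
            = ((Xlt (xR h t x) (j : ℕ) : ℕ) : ℤ) - ((N - Xlt x t - 1 : ℕ) : ℤ) - 1 by omega]
        ring
end
end
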